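/- Let X and Y be interfaces and let r be a seed of X ⊸ Y. Then the direct image ⟨r⟩ maps seeds of X to seeds of Y, and it commutes with arbitrary unions; hence ⟨r⟩ is a sup-lattice morphism from Sd(X) to Sd(Y). -/

import Mathlib

/-- A (monotone) predicate transformer on a set together with its state space:
an *interface*. -/
structure Interface (α : Type*) where
  P : Set α → Set α
  mono : Monotone P

/-- A seed of an interface: a subset `x` with `x ⊆ P x`. -/
def Seed {α : Type*} (X : Interface α) (x : Set α) : Prop := x ⊆ X.P x

/-- Direct image of a set along a relation. -/
def dimage {α β : Type*} (r : Set (α × β)) (x : Set α) : Set β :=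
  {b | ∃ a ∈ x, (a, b) ∈ r}

/-- The dual interface: `P⊥ x = (P xᶜ)ᶜ`. -/
def Interface.dual {α : Type*} (X : Interface α) : Interface α where
  P x := (X.P xᶜ)ᶜ
  mono := fun x y hxy =>
    Set.compl_subset_compl.mpr (X.mono (Set.compl_subset_compl.mpr hxy))

/-- The tensor of two interfaces. -/
def Interface.tensor {α β : Type*} (X : Interface α) (Y : Interface β) :
    Interface (α × β) where
  P r := ⋃ (x : Set α) (y : Set β) (_ : x ×ˢ y ⊆ r), X.P x ×ˢ Y.P y
  mono := by
    intro r s hrs p hp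
    simp only [Set.mem_iUnion] at hp ⊢
    obtain ⟨x, y, hxy, hpx⟩ := hp
    exact ⟨x, y, hxy.trans hrs, hpx⟩

/-- The par of two interfaces: `X ⅋ Y = (X⊥ ⊗ Y⊥)⊥`. -/
def Interface.par {α β : Type*} (X : Interface α) (Y : Interface β) :
    Interface (α × β) :=
  (X.dual.tensor Y.dual).dual

/-- The linear arrow: `X ⊸ Y = X⊥ ⅋ Y`. -/
def Interface.lolli {α β : Type*} (X : Interface α) (Y : Interface β) :
    Interface (α × β) :=
  X.dual.par Y

/-- The with of two interfaces, on the disjoint sum of the state spaces. -/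
def Interface.wth {α β : Type*} (X : Interface α) (Y : Interface β) :
    Interface (α ⊕ β) where
  P z := Sum.inl '' X.P (Sum.inl ⁻¹' z) ∪ Sum.inr '' Y.P (Sum.inr ⁻¹' z)
  mono := by
    intro z w hzw
    exact Set.union_subset_union
      (Set.image_mono (X.mono (Set.preimage_mono hzw)))
      (Set.image_mono (Y.mono (Set.preimage_mono hzw)))

/-- `⋆ᵢ xᵢ` for a multiset of sets: the multisets obtained by picking one element
in each set (up to a bijective pairing). -/
def mstar {α : Type*} (S : Multiset (Set α)) : Set (Multiset α) :=
  {m | Multiset.Rel (fun a x => a ∈ x) m S}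

/-- The exponential `!X`: `[a₁,…,aₙ] ∈ !P(U)` iff there are sets `x₁,…,xₙ` with
`⋆ᵢ xᵢ ⊆ U` and `aᵢ ∈ P xᵢ` for all `i`. -/
def Interface.bang {α : Type*} (X : Interface α) : Interface (Multiset α) where
  P U := {m | ∃ S : Multiset (Set α),
    mstar S ⊆ U ∧ Multiset.Rel (fun a x => a ∈ X.P x) m S}
  mono := by
    intro U V hUV m hm
    obtain ⟨S, hS, hrel⟩ := hm
    exact ⟨S, hS.trans hUV, hrel⟩

/-! Unfolding the duals, `(a, b) ∈ P_{X⊸Y} r` says that whenever `⟨r⟩ x ⊆ y`, `a ∈ P_X x` forces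
`b ∈ P_Y y`. For a seed `x` and `(a, b) ∈ r` with `a ∈ x`, take `y = ⟨r⟩ x`. Commuting with unions
holds for the direct image of any relation. -/

theorem dimage_subset_iff_prod_compl_subset_compl {α β : Type*} {r : Set (α × β)} {x : Set α}
    {y : Set β} : dimage r x ⊆ y ↔ x ×ˢ yᶜ ⊆ rᶜ := by
  constructor
  · rintro h ⟨a, b⟩ ⟨ha, hb⟩ hab
    exact hb (h ⟨a, ha, hab⟩)
  · rintro h b ⟨a, ha, hab⟩
    by_contra hb
    exact h (Set.mk_mem_prod ha hb) hab

theorem dimage_sUnion {α β : Type*} (r : Set (α × β)) (S : Set (Set α)) :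
    dimage r (⋃₀ S) = ⋃ x ∈ S, dimage r x :=
  SetRel.image_sUnion r S

namespace Interface

variable {α β : Type*} (X : Interface α) (Y : Interface β)

theorem dual_dual : X.dual.dual = X := by
  cases X
  simp only [dual, compl_compl]

theorem mem_lolli_P_iff {r : Set (α × β)} {p : α × β} :
    p ∈ (X.lolli Y).P r ↔ ∀ x y, dimage r x ⊆ y → p.1 ∈ X.P x → p.2 ∈ Y.P y := by
  simp only [lolli, par, dual_dual]
  change p ∉ _ ↔ _
  simp only [tensor, dual, Set.mem_iUnion, Set.mem_prod, Set.mem_compl_iff, not_exists, not_and,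
    not_not]
  constructor
  · intro h x y hxy
    simpa only [compl_compl] using h x yᶜ (dimage_subset_iff_prod_compl_subset_compl.mp hxy)
  · intro h x y hxy
    exact h x yᶜ (dimage_subset_iff_prod_compl_subset_compl.mpr (by rwa [compl_compl]))

end Interface

theorem Seed.dimage_of_lolli {α β : Type*} {X : Interface α} {Y : Interface β}
    {r : Set (α × β)} (hr : Seed (X.lolli Y) r) {x : Set α} (hx : Seed X x) :
    Seed Y (dimage r x) := by
  rintro b ⟨a, ha, hab⟩
  exact (X.mem_lolli_P_iff Y).mp (hr hab) x _ le_rfl (hx ha)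

/-- a linear arrow maps seeds to seeds and its direct image commutes
with arbitrary unions: `⟨r⟩` is a sup-lattice morphism from `Sd(X)` to `Sd(Y)`. -/
theorem dimage_sup_lattice_morphism {α β : Type*} (X : Interface α) (Y : Interface β)
    (r : Set (α × β)) (hr : Seed (X.lolli Y) r) :
    (∀ x : Set α, Seed X x → Seed Y (dimage r x)) ∧
    (∀ S : Set (Set α), dimage r (⋃₀ S) = ⋃ x ∈ S, dimage r x) :=
  ⟨fun _ => hr.dimage_of_lolli, dimage_sUnion r⟩
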